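/- For all X, D ∈ ℝ^{n×p}, setting Y := X + D and J_X(D) := D·A(X) − X·Φ(DᵀX), the exact identity Y·A(Y) = X·A(X) + J_X(D) − D·Φ(DᵀX) − (1/2)·X·(DᵀD) − (1/2)·D·(DᵀD) holds. In particular, ‖Y·A(Y) − X·A(X) − J_X(D)‖_F ≤ (‖Φ(DᵀX)‖_F + (1/2)‖X‖_F·‖D‖_F + (1/2)‖D‖_F²)·‖D‖_F, so J_X is the Fréchet derivative of the map X ↦ X·A(X) at X. -/

import Mathlib

open Matrix

attribute [local instance] Matrix.frobeniusNormedAddCommGroup Matrix.frobeniusNormedSpace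

namespace ExPen

noncomputable def finner {n p : ℕ} (A B : Matrix (Fin n) (Fin p) ℝ) : ℝ := (Aᵀ * B).trace

noncomputable def Phi {p : ℕ} (M : Matrix (Fin p) (Fin p) ℝ) : Matrix (Fin p) (Fin p) ℝ :=
  (1 / 2 : ℝ) • (M + Mᵀ)

noncomputable def Amap {n p : ℕ} (X : Matrix (Fin n) (Fin p) ℝ) : Matrix (Fin p) (Fin p) ℝ :=
  (3 / 2 : ℝ) • (1 : Matrix (Fin p) (Fin p) ℝ) - (1 / 2 : ℝ) • (Xᵀ * X)

noncomputable def g {n p : ℕ} (f : Matrix (Fin n) (Fin p) ℝ → ℝ)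
    (X : Matrix (Fin n) (Fin p) ℝ) : ℝ := f (X * Amap X)

noncomputable def hpen {n p : ℕ} (f : Matrix (Fin n) (Fin p) ℝ → ℝ) (β : ℝ)
    (X : Matrix (Fin n) (Fin p) ℝ) : ℝ := g f X + β / 4 * ‖Xᵀ * X - 1‖ ^ 2

noncomputable def dualCLM {n p : ℕ} (G : Matrix (Fin n) (Fin p) ℝ) :
    Matrix (Fin n) (Fin p) ℝ →L[ℝ] ℝ :=
  LinearMap.toContinuousLinearMap
    { toFun := fun D => (Gᵀ * D).trace
      map_add' := by intro D E; simp [Matrix.mul_add]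
      map_smul' := by intro c D; simp [Matrix.mul_smul] }

def HasGradAt {n p : ℕ} (φ : Matrix (Fin n) (Fin p) ℝ → ℝ)
    (X G : Matrix (Fin n) (Fin p) ℝ) : Prop :=
  HasFDerivAt φ (dualCLM G) X

noncomputable def specNorm {n p : ℕ} (X : Matrix (Fin n) (Fin p) ℝ) : ℝ :=
  ‖LinearMap.toContinuousLinearMap
    (Matrix.toEuclideanLin X : EuclideanSpace ℝ (Fin p) →ₗ[ℝ] EuclideanSpace ℝ (Fin n))‖

lemma posSemidef_tmul {n p : ℕ} (X : Matrix (Fin n) (Fin p) ℝ) : (Xᵀ * X).PosSemidef := by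
  simpa [Matrix.conjTranspose_eq_transpose_of_trivial] using
    Matrix.posSemidef_conjTranspose_mul_self X

noncomputable def psdSqrt {m : Type*} [Fintype m] [DecidableEq m] {A : Matrix m m ℝ}
    (hA : A.PosSemidef) : Matrix m m ℝ :=
  hA.1.eigenvectorUnitary.1 * diagonal ((↑) ∘ (√·) ∘ hA.1.eigenvalues) *
    (star hA.1.eigenvectorUnitary : Matrix m m ℝ)

noncomputable def Pst {n p : ℕ} (X : Matrix (Fin n) (Fin p) ℝ) : Matrix (Fin n) (Fin p) ℝ :=
  X * (psdSqrt (posSemidef_tmul X))⁻¹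

/-!
Expanding `Y * A(Y)` for `Y = X + D` gives a polynomial in `D`: its linear part is `J_X(D)` and
the rest is at least quadratic in `D`, so each remaining term is bounded by submultiplicativity of
the Frobenius norm. The coefficient of `‖D‖` in that bound tends to `0` with `D`, which makes
`J_X` the Fréchet derivative.
-/

open Asymptotics Filter Topology

lemma frobenius_norm_mul_transpose_mul_le {l m k r : Type*} [Fintype l] [Fintype m] [Fintype k]
    [Fintype r] (A : Matrix l m ℝ) (B : Matrix k m ℝ) (C : Matrix k r ℝ) :
    ‖A * (Bᵀ * C)‖ ≤ ‖A‖ * (‖B‖ * ‖C‖) :=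
  calc ‖A * (Bᵀ * C)‖ ≤ ‖A‖ * ‖Bᵀ * C‖ := Matrix.frobenius_norm_mul _ _
    _ ≤ ‖A‖ * (‖B‖ * ‖C‖) := by
      gcongr
      simpa only [Matrix.frobenius_norm_transpose] using Matrix.frobenius_norm_mul Bᵀ C

@[fun_prop]
lemma continuous_Phi {p : ℕ} : Continuous (Phi (p := p)) := by
  unfold Phi
  fun_prop

lemma mul_Amap_add {n p : ℕ} (X D : Matrix (Fin n) (Fin p) ℝ) :
    (X + D) * Amap (X + D) =
      X * Amap X + (D * Amap X - X * Phi (Dᵀ * X)) - D * Phi (Dᵀ * X)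
        - (1 / 2 : ℝ) • (X * (Dᵀ * D)) - (1 / 2 : ℝ) • (D * (Dᵀ * D)) := by
  simp only [Amap, Phi, Matrix.transpose_add, Matrix.transpose_mul, Matrix.transpose_transpose,
    Matrix.mul_add, Matrix.add_mul, Matrix.mul_sub, Matrix.mul_smul, smul_add, Matrix.mul_one]
  module

lemma norm_mul_Amap_add_sub_le {n p : ℕ} (X D : Matrix (Fin n) (Fin p) ℝ) :
    ‖(X + D) * Amap (X + D) - X * Amap X - (D * Amap X - X * Phi (Dᵀ * X))‖ ≤
      (‖Phi (Dᵀ * X)‖ + 1 / 2 * ‖X‖ * ‖D‖ + 1 / 2 * ‖D‖ ^ 2) * ‖D‖ := by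
  have hrem : (X + D) * Amap (X + D) - X * Amap X - (D * Amap X - X * Phi (Dᵀ * X)) =
      -(D * Phi (Dᵀ * X) + (1 / 2 : ℝ) • (X * (Dᵀ * D)) + (1 / 2 : ℝ) • (D * (Dᵀ * D))) := by
    rw [mul_Amap_add]
    abel
  have hPhi : ‖D * Phi (Dᵀ * X)‖ ≤ ‖D‖ * ‖Phi (Dᵀ * X)‖ := Matrix.frobenius_norm_mul _ _
  have hX := frobenius_norm_mul_transpose_mul_le X D D
  have hD := frobenius_norm_mul_transpose_mul_le D D D
  rw [hrem, norm_neg]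
  calc _ ≤ ‖D * Phi (Dᵀ * X)‖ + ‖(1 / 2 : ℝ) • (X * (Dᵀ * D))‖
          + ‖(1 / 2 : ℝ) • (D * (Dᵀ * D))‖ := norm_add₃_le
    _ = ‖D * Phi (Dᵀ * X)‖ + 1 / 2 * ‖X * (Dᵀ * D)‖ + 1 / 2 * ‖D * (Dᵀ * D)‖ := by
      rw [norm_smul, norm_smul, Real.norm_of_nonneg (by norm_num)]
    _ ≤ _ := by nlinarith

noncomputable def Jmap {n p : ℕ} (X : Matrix (Fin n) (Fin p) ℝ) :
    Matrix (Fin n) (Fin p) ℝ →L[ℝ] Matrix (Fin n) (Fin p) ℝ :=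
  LinearMap.toContinuousLinearMap
    { toFun := fun E => E * Amap X - X * Phi (Eᵀ * X)
      map_add' := fun E F => by
        simp only [Phi, Matrix.transpose_add, Matrix.add_mul, Matrix.mul_add, smul_add]
        abel
      map_smul' := fun c E => by
        simp only [Phi, Matrix.transpose_smul, Matrix.smul_mul, Matrix.mul_smul, Matrix.mul_add,
          smul_add, RingHom.id_apply]
        module }

lemma Jmap_apply {n p : ℕ} (X E : Matrix (Fin n) (Fin p) ℝ) :
    Jmap X E = E * Amap X - X * Phi (Eᵀ * X) := rfl

lemma hasFDerivAt_mul_Amap {n p : ℕ} (X : Matrix (Fin n) (Fin p) ℝ) :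
    HasFDerivAt (fun Z : Matrix (Fin n) (Fin p) ℝ => Z * Amap Z) (Jmap X) X := by
  set c : Matrix (Fin n) (Fin p) ℝ → ℝ :=
    fun D => ‖Phi (Dᵀ * X)‖ + 1 / 2 * ‖X‖ * ‖D‖ + 1 / 2 * ‖D‖ ^ 2 with hc_def
  have hc : Tendsto c (𝓝 0) (𝓝 0) := by
    have : Continuous c := by fun_prop
    simpa [hc_def, Phi] using this.tendsto 0
  have hcO : (fun D => c D * ‖D‖) =o[𝓝 0] fun D => D := by
    refine isLittleO_norm_right.1 ?_
    simpa using ((isLittleO_one_iff ℝ).2 hc).mul_isBigO (isBigO_refl (‖·‖) (𝓝 0))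
  refine hasFDerivAt_iff_isLittleO_nhds_zero.2 (IsBigO.trans_isLittleO ?_ hcO)
  refine IsBigO.of_bound 1 (Eventually.of_forall fun D => ?_)
  rw [one_mul, Real.norm_of_nonneg (by positivity)]
  exact norm_mul_Amap_add_sub_le X D

theorem statement_0 {n p : ℕ} (X D : Matrix (Fin n) (Fin p) ℝ) :
    (X + D) * Amap (X + D) =
      X * Amap X + (D * Amap X - X * Phi (Dᵀ * X)) - D * Phi (Dᵀ * X)
        - (1 / 2 : ℝ) • (X * (Dᵀ * D)) - (1 / 2 : ℝ) • (D * (Dᵀ * D)) ∧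
    ‖(X + D) * Amap (X + D) - X * Amap X - (D * Amap X - X * Phi (Dᵀ * X))‖ ≤
      (‖Phi (Dᵀ * X)‖ + 1 / 2 * ‖X‖ * ‖D‖ + 1 / 2 * ‖D‖ ^ 2) * ‖D‖ ∧
    ∃ J : Matrix (Fin n) (Fin p) ℝ →L[ℝ] Matrix (Fin n) (Fin p) ℝ,
      (∀ E, J E = E * Amap X - X * Phi (Eᵀ * X)) ∧
      HasFDerivAt (fun Z : Matrix (Fin n) (Fin p) ℝ => Z * Amap Z) J X :=
  ⟨mul_Amap_add X D, norm_mul_Amap_add_sub_le X D, Jmap X, Jmap_apply X, hasFDerivAt_mul_Amap X⟩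

end ExPen
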